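/- For every agent a ∈ A and every agent formula φ of sort a, the world formula E_a φ → A_a φ is derivable in 2CH, i.e. ⊢_e E_a φ → A_a φ. -/

import Mathlib

/-! ## Syntax of the two-level chromatic hypergraph logic 2CH -/

mutual
/-- Agent formulas of sort `a`, for each agent `a : A`. -/
inductive AForm (A : Type) (APa : A → Type) (APe : Type) : A → Type where
  | atom {a : A} : APa a → AForm A APa APe a
  | bot  {a : A} : AForm A APa APe a
  | neg  {a : A} : AForm A APa APe a → AForm A APa APe a
  | and  {a : A} : AForm A APa APe a → AForm A APa APe a → AForm A APa APe a
  | dia  (a : A) : WForm A APa APe → AForm A APa APe a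

/-- World formulas. -/
inductive WForm (A : Type) (APa : A → Type) (APe : Type) : Type where
  | atom : APe → WForm A APa APe
  | bot  : WForm A APa APe
  | neg  : WForm A APa APe → WForm A APa APe
  | and  : WForm A APa APe → WForm A APa APe → WForm A APa APe
  | exi  (a : A) : AForm A APa APe a → WForm A APa APe
end

variable {A : Type} {APa : A → Type} {APe : Type}

/-- Implication of agent formulas. -/
def implA {a : A} (φ ψ : AForm A APa APe a) : AForm A APa APe a := .neg (.and φ (.neg ψ))
/-- Disjunction of agent formulas. -/
def orA {a : A} (φ ψ : AForm A APa APe a) : AForm A APa APe a := .neg (.and (.neg φ) (.neg ψ))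
/-- `⊤` as an agent formula. -/
def topA (a : A) : AForm A APa APe a := .neg .bot
/-- Implication of world formulas. -/
def implW (Φ Ψ : WForm A APa APe) : WForm A APa APe := .neg (.and Φ (.neg Ψ))
/-- Disjunction of world formulas. -/
def orW (Φ Ψ : WForm A APa APe) : WForm A APa APe := .neg (.and (.neg Φ) (.neg Ψ))
/-- The dual modality `□_a Φ := ¬◇_a ¬Φ`. -/
def boxF (a : A) (Φ : WForm A APa APe) : AForm A APa APe a := .neg (.dia a (.neg Φ))
/-- The dual modality `A_a φ := ¬E_a ¬φ`. -/
def allF (a : A) (φ : AForm A APa APe a) : WForm A APa APe := .neg (.exi a (.neg φ))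
/-- Finite disjunction of a list of world formulas. -/
def listOrW : List (WForm A APa APe) → WForm A APa APe
  | [] => .bot
  | Φ :: rest => orW Φ (listOrW rest)

/-- The non-emptiness axiom `⋁_{a∈A} E_a ⊤`. -/
noncomputable def neAxiom (A : Type) [Fintype A] (APa : A → Type) (APe : Type) : WForm A APa APe :=
  listOrW (((Finset.univ : Finset A).toList).map fun a => WForm.exi a (topA a))

/-- `φ` is an instance of a classical propositional tautology (agent sort):
every Boolean valuation respecting `⊥`, `¬`, `∧` makes it true. -/
def ATaut {a : A} (φ : AForm A APa APe a) : Prop :=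
  ∀ v : AForm A APa APe a → Bool,
    v .bot = false →
    (∀ ψ : AForm A APa APe a, v ψ.neg = !(v ψ)) →
    (∀ ψ χ : AForm A APa APe a, v (ψ.and χ) = (v ψ && v χ)) →
    v φ = true

/-- `Φ` is an instance of a classical propositional tautology (world sort). -/
def WTaut (Φ : WForm A APa APe) : Prop :=
  ∀ v : WForm A APa APe → Bool,
    v .bot = false →
    (∀ Ψ : WForm A APa APe, v Ψ.neg = !(v Ψ)) →
    (∀ Ψ Χ : WForm A APa APe, v (Ψ.and Χ) = (v Ψ && v Χ)) →
    v Φ = true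

/-! ## The proof system of 2CH -/

mutual
/-- Derivability `⊢_a` of agent formulas of sort `a`. -/
inductive ProveA (A : Type) [Fintype A] (APa : A → Type) (APe : Type) :
    ∀ {a : A}, AForm A APa APe a → Prop where
  | taut {a : A} {φ : AForm A APa APe a} : ATaut φ → ProveA A APa APe φ
  | mp {a : A} {φ ψ : AForm A APa APe a} :
      ProveA A APa APe (implA φ ψ) → ProveA A APa APe φ → ProveA A APa APe ψ
  | nec {a : A} {Φ : WForm A APa APe} :
      ProveE A APa APe Φ → ProveA A APa APe (boxF a Φ)
  | monoDia {a : A} {Φ Ψ : WForm A APa APe} :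
      ProveE A APa APe (implW Φ Ψ) →
      ProveA A APa APe (implA (AForm.dia a Φ) (AForm.dia a Ψ))
  | monoBox {a : A} {Φ Ψ : WForm A APa APe} :
      ProveE A APa APe (implW Φ Ψ) →
      ProveA A APa APe (implA (boxF a Φ) (boxF a Ψ))
  | adj1 {a : A} {Φ : WForm A APa APe} {ψ : AForm A APa APe a} :
      ProveE A APa APe (implW Φ (allF a ψ)) →
      ProveA A APa APe (implA (AForm.dia a Φ) ψ)
  | adj2 {a : A} {φ : AForm A APa APe a} {Ψ : WForm A APa APe} :
      ProveE A APa APe (implW (WForm.exi a φ) Ψ) →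
      ProveA A APa APe (implA φ (boxF a Ψ))
  | surj {a : A} {φ : AForm A APa APe a} :
      ProveA A APa APe (implA φ (AForm.dia a (WForm.exi a φ)))
  | func {a : A} {φ : AForm A APa APe a} :
      ProveA A APa APe (implA (AForm.dia a (WForm.exi a φ)) φ)

/-- Derivability `⊢_e` of world formulas. -/
inductive ProveE (A : Type) [Fintype A] (APa : A → Type) (APe : Type) :
    WForm A APa APe → Prop where
  | taut {Φ : WForm A APa APe} : WTaut Φ → ProveE A APa APe Φ
  | mp {Φ Ψ : WForm A APa APe} :
      ProveE A APa APe (implW Φ Ψ) → ProveE A APa APe Φ → ProveE A APa APe Ψ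
  | nec {a : A} {φ : AForm A APa APe a} :
      ProveA A APa APe φ → ProveE A APa APe (allF a φ)
  | monoExi {a : A} {φ ψ : AForm A APa APe a} :
      ProveA A APa APe (implA φ ψ) →
      ProveE A APa APe (implW (WForm.exi a φ) (WForm.exi a ψ))
  | monoAll {a : A} {φ ψ : AForm A APa APe a} :
      ProveA A APa APe (implA φ ψ) →
      ProveE A APa APe (implW (allF a φ) (allF a ψ))
  | adj1 {a : A} {Φ : WForm A APa APe} {ψ : AForm A APa APe a} :
      ProveA A APa APe (implA (AForm.dia a Φ) ψ) →
      ProveE A APa APe (implW Φ (allF a ψ))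
  | adj2 {a : A} {φ : AForm A APa APe a} {Ψ : WForm A APa APe} :
      ProveA A APa APe (implA φ (boxF a Ψ)) →
      ProveE A APa APe (implW (WForm.exi a φ) Ψ)
  | nonempty : ProveE A APa APe (neAxiom A APa APe)
end

/-! ## Chromatic hypergraphs and their models -/

/-- A chromatic hypergraph over the set of agents `A`. -/
structure ChromHyp (A : Type) where
  /-- hyperedges (worlds) -/
  E : Type
  /-- views of agent `a` -/
  V : A → Type
  /-- the surjective partial function assigning to a hyperedge the view of agent `a` in it -/
  proj : ∀ a : A, E → Option (V a)
  surj : ∀ (a : A) (v : V a), ∃ e : E, proj a e = some v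
  edge_nonempty : ∀ e : E, ∃ a : A, (proj a e).isSome

/-- A chromatic hypergraph model: a chromatic hypergraph together with valuations. -/
structure ChromHypModel (A : Type) (APa : A → Type) (APe : Type) extends ChromHyp A where
  valA : ∀ a : A, APa a → Set (V a)
  valE : APe → Set E

mutual
/-- Satisfaction `H, v ⊨_a φ` of an agent formula at a view of agent `a`. -/
def SatA (H : ChromHypModel A APa APe) : ∀ (a : A), H.V a → AForm A APa APe a → Prop
  | a, v, .atom p => v ∈ H.valA a p
  | _, _, .bot => False
  | a, v, .neg φ => ¬ SatA H a v φ
  | a, v, .and φ ψ => SatA H a v φ ∧ SatA H a v ψ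
  | a, v, .dia _ Φ => ∃ e : H.E, H.proj a e = some v ∧ SatE H e Φ

/-- Satisfaction `H, e ⊨_e Φ` of a world formula at a hyperedge. -/
def SatE (H : ChromHypModel A APa APe) : H.E → WForm A APa APe → Prop
  | e, .atom p => e ∈ H.valE p
  | _, .bot => False
  | e, .neg Φ => ¬ SatE H e Φ
  | e, .and Φ Ψ => SatE H e Φ ∧ SatE H e Ψ
  | e, .exi a φ => ∃ v : H.V a, H.proj a e = some v ∧ SatA H a v φ
end

/-- `⊢_e E_a φ → A_a φ`: if `φ` holds in some point of view of `a`,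
then it holds in all points of view of `a`. -/
theorem exi_implies_all (A : Type) [Fintype A] (APa : A → Type) (APe : Type)
    (a : A) (φ : AForm A APa APe a) :
    ProveE A APa APe (implW (WForm.exi a φ) (allF a φ)) :=
  ProveE.adj1 ProveA.func
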